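/- Let Z ~ ESN_k(0, Ω̄, α, τ), with T = α₀ + αᵀZ where α₀ = τ√(1+αᵀΩ̄α). Then E[T·ζ₁(T)] = (α₀ − τ·αᵀδ)·ζ₁(τ)/√(1+αᵀΩ̄α), where δ = Ω̄α/√(1+αᵀΩ̄α) and ζ₁(x) = φ(x)/Φ(x). -/

import Mathlib

open Matrix MeasureTheory Real

noncomputable def phi (x : ℝ) : ℝ := (Real.sqrt (2 * Real.pi))⁻¹ * Real.exp (-x ^ 2 / 2)

noncomputable def Phi (x : ℝ) : ℝ := ∫ t in Set.Iic x, phi t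

noncomputable def zeta1 (x : ℝ) : ℝ := phi x / Phi x

/-- Density of `N_k(0, Ω)`. -/
noncomputable def gaussPdf {k : ℕ} (Ω : Matrix (Fin k) (Fin k) ℝ) (z : Fin k → ℝ) : ℝ :=
  (2 * Real.pi) ^ (-(k : ℝ) / 2) * Ω.det ^ (-(1 : ℝ) / 2) *
    Real.exp (-(1 / 2) * (z ⬝ᵥ Ω⁻¹ *ᵥ z))

/-- Density of `ESN_k(0, Ω̄, α, τ)`. -/
noncomputable def esnPdf {k : ℕ} (Ωb : Matrix (Fin k) (Fin k) ℝ) (α : Fin k → ℝ) (τ : ℝ)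
    (z : Fin k → ℝ) : ℝ :=
  gaussPdf Ωb z * Phi (τ * Real.sqrt (1 + α ⬝ᵥ Ωb *ᵥ α) + α ⬝ᵥ z) / Phi τ

/-!
Since `ζ₁(T) Φ(T) = φ(T)`, the factor `Φ(T)` of the ESN density cancels, leaving
`T φ(T) φ_k(z; Ω̄) / Φ(τ)`. Completing the square in `z`, with `c = √(1 + αᵀΩ̄α)` and
`(Ω̄ - δδᵀ)⁻¹ = Ω̄⁻¹ + ααᵀ`, gives `φ_k(z; Ω̄) φ(τc + αᵀz) = φ(τ)/c · φ_k(z + τδ; Ω̄ - δδᵀ)`.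
The integral is therefore `φ(τ)/(c Φ(τ))` times the mean of the affine function `τc + αᵀz` under
`N_k(-τδ, Ω̄ - δδᵀ)`, which is `τc - τ αᵀδ`.
-/

lemma phi_eq_gaussianPDFReal : phi = ProbabilityTheory.gaussianPDFReal 0 1 := by
  ext x
  simp [phi, ProbabilityTheory.gaussianPDFReal]

lemma Phi_pos (x : ℝ) : 0 < Phi x := by
  have hpos (t : ℝ) : 0 < phi t := by
    rw [phi_eq_gaussianPDFReal]
    exact ProbabilityTheory.gaussianPDFReal_pos _ _ _ one_ne_zero
  have hint : Integrable phi := by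
    rw [phi_eq_gaussianPDFReal]
    exact ProbabilityTheory.integrable_gaussianPDFReal _ _
  have hsupp : Function.support phi = Set.univ := Set.eq_univ_of_forall fun t => (hpos t).ne'
  rw [Phi, setIntegral_pos_iff_support_of_nonneg_ae (ae_of_all _ fun t => (hpos t).le)
    hint.integrableOn, hsupp, Set.univ_inter]
  simp

lemma zeta1_mul_Phi (x : ℝ) : zeta1 x * Phi x = phi x :=
  div_mul_cancel₀ _ (Phi_pos x).ne'

lemma rpow_neg_natCast_div_two {x : ℝ} (hx : 0 ≤ x) (n : ℕ) :
    x ^ (-(n : ℝ) / 2) = (√x ^ n)⁻¹ := by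
  rw [sqrt_eq_rpow, ← rpow_natCast, ← rpow_mul hx, ← rpow_neg hx]
  ring_nf

lemma rpow_neg_one_div_two {x : ℝ} (hx : 0 ≤ x) : x ^ (-(1 : ℝ) / 2) = (√x)⁻¹ := by
  simpa using rpow_neg_natCast_div_two hx 1

section StandardGaussian

variable {ι : Type*} [Fintype ι]

lemma exp_neg_half_dotProduct_self (y : ι → ℝ) :
    exp (-(1 / 2) * (y ⬝ᵥ y)) = ∏ i, exp (-(1 / 2) * y i ^ 2) := by
  simp only [← exp_sum, dotProduct, Finset.mul_sum, sq]

lemma integrable_exp_neg_half_dotProduct_self :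
    Integrable fun y : ι → ℝ => exp (-(1 / 2) * (y ⬝ᵥ y)) := by
  simp only [exp_neg_half_dotProduct_self]
  exact Integrable.fintype_prod fun _ => integrable_exp_neg_mul_sq (by norm_num)

lemma integral_exp_neg_half_dotProduct_self :
    ∫ y : ι → ℝ, exp (-(1 / 2) * (y ⬝ᵥ y)) = √(2 * π) ^ Fintype.card ι := by
  simp only [exp_neg_half_dotProduct_self]
  rw [integral_fintype_prod_volume_eq_pow (fun x : ℝ => exp (-(1 / 2) * x ^ 2)),
    integral_gaussian, div_div_eq_mul_div, div_one, mul_comm]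

lemma integrable_apply_mul_exp_neg_half_dotProduct_self (j : ι) :
    Integrable fun y : ι → ℝ => y j * exp (-(1 / 2) * (y ⬝ᵥ y)) := by
  classical
  let f : ι → ℝ → ℝ :=
    Function.update (fun _ x => exp (-(1 / 2) * x ^ 2)) j fun x => x * exp (-(1 / 2) * x ^ 2)
  have hf (y : ι → ℝ) : y j * exp (-(1 / 2) * (y ⬝ᵥ y)) = ∏ i, f i (y i) := by
    rw [exp_neg_half_dotProduct_self, Fintype.prod_eq_mul_prod_compl j,
      Fintype.prod_eq_mul_prod_compl j (fun i => f i (y i)), ← mul_assoc]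
    refine congrArg₂ _ (by simp [f]) (Finset.prod_congr rfl fun i hi => ?_)
    simp [f, Function.update_of_ne (Finset.mem_compl.1 hi ∘ Finset.mem_singleton.2)]
  simp only [hf]
  refine Integrable.fintype_prod_dep fun i => ?_
  rcases eq_or_ne i j with rfl | hij
  · simpa [f] using integrable_mul_exp_neg_mul_sq (b := 1 / 2) (by norm_num)
  · simpa [f, hij] using integrable_exp_neg_mul_sq (b := 1 / 2) (by norm_num)

lemma integral_dotProduct_mul_exp_neg_half_dotProduct_self (γ : ι → ℝ) :
    ∫ y : ι → ℝ, (γ ⬝ᵥ y) * exp (-(1 / 2) * (y ⬝ᵥ y)) = 0 := by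
  have hodd := integral_neg_eq_self (fun y : ι → ℝ => (γ ⬝ᵥ y) * exp (-(1 / 2) * (y ⬝ᵥ y))) volume
  simp only [dotProduct_neg, neg_dotProduct, neg_neg, neg_mul, integral_neg] at hodd ⊢
  linarith

lemma integral_affine_mul_exp_neg_half_dotProduct_self (C : ℝ) (γ : ι → ℝ) :
    ∫ y : ι → ℝ, (C + γ ⬝ᵥ y) * exp (-(1 / 2) * (y ⬝ᵥ y)) = C * √(2 * π) ^ Fintype.card ι := by
  have hlin : Integrable fun y : ι → ℝ => (γ ⬝ᵥ y) * exp (-(1 / 2) * (y ⬝ᵥ y)) := by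
    simp only [dotProduct, Finset.sum_mul, mul_assoc]
    exact integrable_finsetSum _ fun j _ =>
      (integrable_apply_mul_exp_neg_half_dotProduct_self j).const_mul (γ j)
  simp only [add_mul]
  rw [integral_add (integrable_exp_neg_half_dotProduct_self.const_mul C) hlin, integral_const_mul,
    integral_exp_neg_half_dotProduct_self, integral_dotProduct_mul_exp_neg_half_dotProduct_self,
    add_zero]

end StandardGaussian

lemma integral_comp_mulVec {ι E : Type*} [Fintype ι] [DecidableEq ι] [NormedAddCommGroup E]
    [NormedSpace ℝ E] {B : Matrix ι ι ℝ} (hB : B.det ≠ 0) (f : (ι → ℝ) → E) :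
    ∫ y, f (B *ᵥ y) = |B.det|⁻¹ • ∫ w, f w := by
  have hφ : MeasurableEmbedding (toLin' B) :=
    ((toLin' B).equivOfDetNeZero (by rwa [LinearMap.det_toLin'])).toContinuousLinearEquiv
      |>.toHomeomorph.measurableEmbedding
  rw [← abs_inv, ← ENNReal.toReal_ofReal (abs_nonneg _), ← integral_smul_measure,
    ← Real.map_matrix_volume_pi_eq_smul_volume_pi hB, hφ.integral_map]
  rfl

lemma gaussPdf_mulVec_of_eq_mul_transpose {k : ℕ} {S B : Matrix (Fin k) (Fin k) ℝ}
    (hSB : S = B * Bᵀ) (hB : B.det ≠ 0) (y : Fin k → ℝ) :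
    gaussPdf S (B *ᵥ y) = (|B.det| * √(2 * π) ^ k)⁻¹ * exp (-(1 / 2) * (y ⬝ᵥ y)) := by
  subst hSB
  have hB' : IsUnit B.det := hB.isUnit
  have hBt : IsUnit Bᵀ.det := by rwa [det_transpose]
  have hquad : (B *ᵥ y) ⬝ᵥ (B * Bᵀ)⁻¹ *ᵥ (B *ᵥ y) = y ⬝ᵥ y := by
    have hBSB : Bᵀ * (B * Bᵀ)⁻¹ * B = 1 := by
      rw [Matrix.mul_inv_rev, ← Matrix.mul_assoc, mul_nonsing_inv _ hBt, Matrix.one_mul,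
        nonsing_inv_mul _ hB']
    rw [mulVec_mulVec, dotProduct_mulVec, ← vecMul_transpose, vecMul_vecMul, ← Matrix.mul_assoc,
      hBSB, vecMul_one]
  have hdet : (B * Bᵀ).det ^ (-(1 : ℝ) / 2) = |B.det|⁻¹ := by
    rw [det_mul, det_transpose, ← sq, rpow_neg_one_div_two (sq_nonneg _), sqrt_sq_eq_abs]
  rw [gaussPdf, hquad, rpow_neg_natCast_div_two (by positivity), hdet]
  ring

open scoped MatrixOrder in
lemma integral_affine_mul_gaussPdf {k : ℕ} {S : Matrix (Fin k) (Fin k) ℝ} (hS : S.PosDef)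
    (C : ℝ) (β μ : Fin k → ℝ) :
    ∫ w, (C + β ⬝ᵥ w) * gaussPdf S (w - μ) = C + β ⬝ᵥ μ := by
  obtain ⟨A, hA⟩ := CStarAlgebra.nonneg_iff_eq_star_mul_self.mp hS.posSemidef.nonneg
  set B := Aᵀ
  have hSB : S = B * Bᵀ := by rw [hA, transpose_transpose]; rfl
  have hB : B.det ≠ 0 := fun h => hS.det_pos.ne' (by rw [hSB, det_mul, h, zero_mul])
  calc ∫ w, (C + β ⬝ᵥ w) * gaussPdf S (w - μ)
      = ∫ v, (C + β ⬝ᵥ μ + β ⬝ᵥ v) * gaussPdf S v := by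
        rw [← integral_add_right_eq_self _ μ]
        refine integral_congr_ae (ae_of_all _ fun v => ?_)
        simp only [dotProduct_add, add_sub_cancel_right]
        ring
    _ = |B.det| * ∫ y, (C + β ⬝ᵥ μ + β ⬝ᵥ (B *ᵥ y)) * gaussPdf S (B *ᵥ y) := by
        rw [integral_comp_mulVec hB fun w => (C + β ⬝ᵥ μ + β ⬝ᵥ w) * gaussPdf S w, smul_eq_mul,
          mul_inv_cancel_left₀ (abs_pos.2 hB).ne']
    _ = |B.det| * ∫ y, (|B.det| * √(2 * π) ^ k)⁻¹ *
          ((C + β ⬝ᵥ μ + (β ᵥ* B) ⬝ᵥ y) * exp (-(1 / 2) * (y ⬝ᵥ y))) := by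
        congr 1
        refine integral_congr_ae (ae_of_all _ fun y => ?_)
        dsimp only
        rw [gaussPdf_mulVec_of_eq_mul_transpose hSB hB, dotProduct_mulVec]
        ring
    _ = C + β ⬝ᵥ μ := by
        rw [integral_const_mul, integral_affine_mul_exp_neg_half_dotProduct_self, Fintype.card_fin]
        field_simp

section RankOne

variable {n : Type*} [Fintype n]

lemma one_add_dotProduct_mulVec_pos {Ω : Matrix n n ℝ} (hΩ : Ω.PosDef) (α : n → ℝ) :
    0 < 1 + α ⬝ᵥ Ω *ᵥ α := by
  have := hΩ.posSemidef.dotProduct_mulVec_nonneg α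
  simp only [star_trivial] at this
  linarith

lemma dotProduct_add_vecMulVec_self_mulVec (A : Matrix n n ℝ) (α x : n → ℝ) :
    x ⬝ᵥ (A + vecMulVec α α) *ᵥ x = x ⬝ᵥ A *ᵥ x + (α ⬝ᵥ x) ^ 2 := by
  rw [add_mulVec, dotProduct_add, vecMulVec_mulVec, dotProduct_smul, op_smul_eq_mul,
    dotProduct_comm x α, sq]

variable {Ω : Matrix n n ℝ} {α δ : n → ℝ} {c : ℝ}

lemma dotProduct_eq_of_eq_smul_mulVec (hδ : δ = c⁻¹ • (Ω *ᵥ α)) :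
    α ⬝ᵥ δ = c⁻¹ * (α ⬝ᵥ Ω *ᵥ α) := by
  rw [hδ, dotProduct_smul, smul_eq_mul]

variable [DecidableEq n]

lemma det_add_vecMulVec {A : Matrix n n ℝ} (hA : IsUnit A.det) (u v : n → ℝ) :
    (A + vecMulVec u v).det = A.det * (1 + v ⬝ᵥ A⁻¹ *ᵥ u) := by
  rw [vecMulVec_eq Unit, det_add_replicateCol_mul_replicateRow hA]
  congr 1
  rw [det_unique, Matrix.mul_assoc, ← replicateCol_mulVec]
  simp [replicateRow_mul_replicateCol_apply]

lemma inv_mulVec_eq_of_eq_smul_mulVec (hΩ : IsUnit Ω.det) (hδ : δ = c⁻¹ • (Ω *ᵥ α)) :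
    Ω⁻¹ *ᵥ δ = c⁻¹ • α := by
  rw [hδ, mulVec_smul, mulVec_mulVec, nonsing_inv_mul _ hΩ, one_mulVec]

lemma vecMul_inv_eq_of_eq_smul_mulVec (hΩs : Ω.IsSymm) (hΩ : IsUnit Ω.det)
    (hδ : δ = c⁻¹ • (Ω *ᵥ α)) : δ ᵥ* Ω⁻¹ = c⁻¹ • α := by
  rw [← mulVec_transpose, transpose_nonsing_inv, hΩs.eq, inv_mulVec_eq_of_eq_smul_mulVec hΩ hδ]

lemma sub_vecMulVec_mul_inv_add_vecMulVec (hΩs : Ω.IsSymm) (hΩ : IsUnit Ω.det)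
    (hc : c ^ 2 = 1 + α ⬝ᵥ Ω *ᵥ α) (hc0 : c ≠ 0) (hδ : δ = c⁻¹ • (Ω *ᵥ α)) :
    (Ω - vecMulVec δ δ) * (Ω⁻¹ + vecMulVec α α) = 1 := by
  rw [Matrix.sub_mul, Matrix.mul_add, Matrix.mul_add, mul_nonsing_inv _ hΩ, vecMulVec_mul,
    vecMul_inv_eq_of_eq_smul_mulVec hΩs hΩ hδ,
    mul_vecMulVec, vecMulVec_mul_vecMulVec, dotProduct_comm δ α,
    dotProduct_eq_of_eq_smul_mulVec hδ, hδ]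
  simp only [smul_vecMulVec, vecMulVec_smul, smul_smul, ← add_smul]
  have hscalar : c⁻¹ * c⁻¹ + c⁻¹ * (α ⬝ᵥ Ω *ᵥ α) * c⁻¹ = 1 := by
    field_simp
    linear_combination -hc
  rw [hscalar, one_smul, add_sub_cancel_right]

lemma det_sub_vecMulVec (hΩ : IsUnit Ω.det) (hc : c ^ 2 = 1 + α ⬝ᵥ Ω *ᵥ α) (hc0 : c ≠ 0)
    (hδ : δ = c⁻¹ • (Ω *ᵥ α)) :
    (Ω - vecMulVec δ δ).det = Ω.det / c ^ 2 := by
  rw [sub_eq_add_neg, ← neg_vecMulVec, det_add_vecMulVec hΩ, mulVec_neg,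
    inv_mulVec_eq_of_eq_smul_mulVec hΩ hδ, dotProduct_neg, dotProduct_smul, dotProduct_comm,
    dotProduct_eq_of_eq_smul_mulVec hδ, smul_eq_mul]
  field_simp
  linear_combination Ω.det * hc

lemma dotProduct_inv_mulVec_add_sq_eq (hΩs : Ω.IsSymm) (hΩ : IsUnit Ω.det)
    (hc : c ^ 2 = 1 + α ⬝ᵥ Ω *ᵥ α) (hc0 : c ≠ 0) (hδ : δ = c⁻¹ • (Ω *ᵥ α)) (τ : ℝ) (z : n → ℝ) :
    z ⬝ᵥ Ω⁻¹ *ᵥ z + (τ * c + α ⬝ᵥ z) ^ 2 =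
      (z + τ • δ) ⬝ᵥ (Ω⁻¹ + vecMulVec α α) *ᵥ (z + τ • δ) + τ ^ 2 := by
  have hzδ : z ⬝ᵥ Ω⁻¹ *ᵥ δ = c⁻¹ * (α ⬝ᵥ z) := by
    rw [inv_mulVec_eq_of_eq_smul_mulVec hΩ hδ, dotProduct_smul, smul_eq_mul, dotProduct_comm]
  have hδz : δ ⬝ᵥ Ω⁻¹ *ᵥ z = c⁻¹ * (α ⬝ᵥ z) := by
    rw [dotProduct_mulVec, vecMul_inv_eq_of_eq_smul_mulVec hΩs hΩ hδ, smul_dotProduct, smul_eq_mul]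
  have hδδ : δ ⬝ᵥ Ω⁻¹ *ᵥ δ = c⁻¹ * (α ⬝ᵥ δ) := by
    rw [inv_mulVec_eq_of_eq_smul_mulVec hΩ hδ, dotProduct_smul, smul_eq_mul, dotProduct_comm]
  rw [dotProduct_add_vecMulVec_self_mulVec, mulVec_add, mulVec_smul, dotProduct_add, add_dotProduct,
    add_dotProduct, dotProduct_smul, smul_dotProduct, smul_dotProduct, dotProduct_smul,
    dotProduct_add, dotProduct_smul, hzδ, hδz, hδδ, dotProduct_eq_of_eq_smul_mulVec hδ]
  simp only [smul_eq_mul]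
  field_simp
  linear_combination (τ ^ 2 * c ^ 2 + 2 * τ * c * (α ⬝ᵥ z) + τ ^ 2 * (α ⬝ᵥ Ω *ᵥ α)) * hc

lemma posDef_sub_vecMulVec (hΩ : Ω.PosDef) (hδ : δ = (√(1 + α ⬝ᵥ Ω *ᵥ α))⁻¹ • (Ω *ᵥ α)) :
    (Ω - vecMulVec δ δ).PosDef := by
  have hpos := one_add_dotProduct_mulVec_pos hΩ α
  have hM : (Ω⁻¹ + vecMulVec α α).PosDef :=
    hΩ.inv.add_posSemidef (by simpa using posSemidef_vecMulVec_self_star α)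
  rw [← inv_eq_left_inv (sub_vecMulVec_mul_inv_add_vecMulVec
    (isHermitian_iff_isSymm.1 hΩ.isHermitian) hΩ.det_pos.ne'.isUnit (sq_sqrt hpos.le)
    (sqrt_pos.2 hpos).ne' hδ)]
  exact hM.inv

end RankOne

lemma gaussPdf_mul_phi {k : ℕ} {Ω : Matrix (Fin k) (Fin k) ℝ} (hΩ : Ω.PosDef) (α : Fin k → ℝ)
    (τ : ℝ) {δ : Fin k → ℝ} (hδ : δ = (√(1 + α ⬝ᵥ Ω *ᵥ α))⁻¹ • (Ω *ᵥ α)) (z : Fin k → ℝ) :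
    gaussPdf Ω z * phi (τ * √(1 + α ⬝ᵥ Ω *ᵥ α) + α ⬝ᵥ z) =
      phi τ / √(1 + α ⬝ᵥ Ω *ᵥ α) * gaussPdf (Ω - vecMulVec δ δ) (z + τ • δ) := by
  set c := √(1 + α ⬝ᵥ Ω *ᵥ α)
  have hpos := one_add_dotProduct_mulVec_pos hΩ α
  have hc0 : 0 < c := sqrt_pos.2 hpos
  have hc : c ^ 2 = 1 + α ⬝ᵥ Ω *ᵥ α := sq_sqrt hpos.le
  have hΩs : Ω.IsSymm := isHermitian_iff_isSymm.1 hΩ.isHermitian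
  have hΩu : IsUnit Ω.det := hΩ.det_pos.ne'.isUnit
  have hinv : (Ω - vecMulVec δ δ)⁻¹ = Ω⁻¹ + vecMulVec α α :=
    inv_eq_right_inv (sub_vecMulVec_mul_inv_add_vecMulVec hΩs hΩu hc hc0.ne' hδ)
  have hdet_nonneg : 0 ≤ (Ω - vecMulVec δ δ).det := by
    rw [det_sub_vecMulVec hΩu hc hc0.ne' hδ]
    exact div_nonneg hΩ.det_pos.le (sq_nonneg c)
  have hdet : √(Ω - vecMulVec δ δ).det = √Ω.det / c := by
    rw [det_sub_vecMulVec hΩu hc hc0.ne' hδ, sqrt_div hΩ.det_pos.le, sqrt_sq hc0.le]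
  have hexp : exp (-(1 / 2) * (z ⬝ᵥ Ω⁻¹ *ᵥ z)) * exp (-(τ * c + α ⬝ᵥ z) ^ 2 / 2) =
      exp (-τ ^ 2 / 2) *
        exp (-(1 / 2) * ((z + τ • δ) ⬝ᵥ (Ω⁻¹ + vecMulVec α α) *ᵥ (z + τ • δ))) := by
    rw [← exp_add, ← exp_add]
    congr 1
    linear_combination (-1 / 2 : ℝ) * dotProduct_inv_mulVec_add_sq_eq hΩs hΩu hc hc0.ne' hδ τ z
  rw [gaussPdf, gaussPdf, hinv, rpow_neg_one_div_two hΩ.det_pos.le,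
    rpow_neg_one_div_two hdet_nonneg, hdet, phi, phi, inv_div]
  calc _ = (2 * π) ^ (-(k : ℝ) / 2) * (√(2 * π))⁻¹ * (√Ω.det)⁻¹ *
        (exp (-(1 / 2) * (z ⬝ᵥ Ω⁻¹ *ᵥ z)) * exp (-(τ * c + α ⬝ᵥ z) ^ 2 / 2)) := by ring
    _ = _ := by
      rw [hexp]
      field_simp

theorem esn_expectation_T_zeta1_general {k : ℕ} (Ωb : Matrix (Fin k) (Fin k) ℝ) (hΩ : Ωb.PosDef)
    (α : Fin k → ℝ) (τ : ℝ)
    (α0 : ℝ) (hα0 : α0 = τ * Real.sqrt (1 + α ⬝ᵥ Ωb *ᵥ α))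
    (δ : Fin k → ℝ) (hδ : δ = (Real.sqrt (1 + α ⬝ᵥ Ωb *ᵥ α))⁻¹ • (Ωb *ᵥ α)) :
    ∫ z : Fin k → ℝ, (α0 + α ⬝ᵥ z) * zeta1 (α0 + α ⬝ᵥ z) * esnPdf Ωb α τ z =
      (α0 - τ * (α ⬝ᵥ δ)) * zeta1 τ / Real.sqrt (1 + α ⬝ᵥ Ωb *ᵥ α) := by
  subst hα0
  have hpointwise (z : Fin k → ℝ) :
      (τ * √(1 + α ⬝ᵥ Ωb *ᵥ α) + α ⬝ᵥ z) * zeta1 (τ * √(1 + α ⬝ᵥ Ωb *ᵥ α) + α ⬝ᵥ z) *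
          esnPdf Ωb α τ z =
        phi τ / √(1 + α ⬝ᵥ Ωb *ᵥ α) / Phi τ *
          ((τ * √(1 + α ⬝ᵥ Ωb *ᵥ α) + α ⬝ᵥ z) * gaussPdf (Ωb - vecMulVec δ δ) (z - -(τ • δ))) := by
    rw [esnPdf, sub_neg_eq_add]
    calc _ = (τ * √(1 + α ⬝ᵥ Ωb *ᵥ α) + α ⬝ᵥ z) *
          (gaussPdf Ωb z * phi (τ * √(1 + α ⬝ᵥ Ωb *ᵥ α) + α ⬝ᵥ z)) / Phi τ := by
          rw [← zeta1_mul_Phi]; ring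
      _ = _ := by rw [gaussPdf_mul_phi hΩ α τ hδ]; ring
  rw [integral_congr_ae (ae_of_all _ hpointwise), integral_const_mul,
    integral_affine_mul_gaussPdf (posDef_sub_vecMulVec hΩ hδ), zeta1, dotProduct_neg,
    dotProduct_smul, smul_eq_mul]
  ring

theorem esn_expectation_T_zeta1 {k : ℕ} (Ωb : Matrix (Fin k) (Fin k) ℝ) (hΩ : Ωb.PosDef)
    (hdiag : ∀ i, Ωb i i = 1) (α : Fin k → ℝ) (τ : ℝ)
    (α0 : ℝ) (hα0 : α0 = τ * Real.sqrt (1 + α ⬝ᵥ Ωb *ᵥ α))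
    (δ : Fin k → ℝ) (hδ : δ = (Real.sqrt (1 + α ⬝ᵥ Ωb *ᵥ α))⁻¹ • (Ωb *ᵥ α)) :
    ∫ z : Fin k → ℝ, (α0 + α ⬝ᵥ z) * zeta1 (α0 + α ⬝ᵥ z) * esnPdf Ωb α τ z =
      (α0 - τ * (α ⬝ᵥ δ)) * zeta1 τ / Real.sqrt (1 + α ⬝ᵥ Ωb *ᵥ α) :=
  esn_expectation_T_zeta1_general Ωb hΩ α τ α0 hα0 δ hδ
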